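/- arXiv:1907.05250 — 5 statements merged into one kernel-verified Lean document; each statement's English description precedes it below -/
import Mathlib

section
/- Let (X,d) be a Polish metric space, x₀ ∈ X, η ≥ 1, p ∈ [1,η], and let μ, ν be Borel probability measures on X with finite η-th moments M_μ = ∫ d(x,x₀)^η μ(dx) and M_ν = ∫ d(x,x₀)^η ν(dx). Then for every t > 0, W_p(μ,ν)^p ≤ (2t)^{p−1} · W₁(μ,ν) + 2^{p+1} · t^{p−η} · (M_μ + M_ν). -/
open MeasureTheory ProbabilityTheory Filter ENNReal

noncomputable def wassersteinE {X : Type*} [MeasurableSpace X] [PseudoEMetricSpace X]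
    (p : ℝ) (μ ν : Measure X) : ℝ≥0∞ :=
  (⨅ (π : Measure (X × X)) (_ : π.map Prod.fst = μ ∧ π.map Prod.snd = ν),
    ∫⁻ z, edist z.1 z.2 ^ p ∂π) ^ (1 / p)

noncomputable def wasserstein {X : Type*} [MeasurableSpace X] [PseudoEMetricSpace X]
    (p : ℝ) (μ ν : Measure X) : ℝ :=
  (wassersteinE p μ ν).toReal

/-! For `s > 0` and `1 ≤ p ≤ η`, splitting at `d = s` gives the pointwise bound
`d ^ p ≤ s ^ (p - 1) * d + s ^ (p - η) * d ^ η`, and the triangle inequality through `x₀` gives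
`d(x, y) ^ η ≤ 2 ^ (η - 1) * (d(x, x₀) ^ η + d(y, x₀) ^ η)`. Integrated against a coupling, the
last term only sees the marginals, so the bound holds uniformly over couplings and passes to the
infimum. With `s = 2t` the constant is `2 ^ (p - 1) ≤ 2 ^ (p + 1)`. Passing to real numbers,
where `toReal ∞ = 0`, needs `W₁ < ∞` whenever `W_p < ∞`; this follows from `d ≤ 1 + d ^ p`
because `μ` has mass one. -/

namespace ENNReal

theorem rpow_le_mul_add_mul_rpow {d s : ℝ≥0∞} {p η : ℝ} (hs₀ : s ≠ 0) (hs : s ≠ ∞)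
    (hp : 1 ≤ p) (hpη : p ≤ η) : d ^ p ≤ s ^ (p - 1) * d + s ^ (p - η) * d ^ η := by
  rcases le_or_gt d s with hds | hsd
  · refine le_add_right ?_
    rcases eq_or_ne d 0 with rfl | hd₀
    · simp [zero_rpow_of_pos (by linarith : 0 < p)]
    calc d ^ p = d ^ (p - 1) * d ^ (1 : ℝ) := by
          rw [← rpow_add _ _ hd₀ (hds.trans_lt hs.lt_top).ne, sub_add_cancel]
      _ ≤ s ^ (p - 1) * d := by
          rw [rpow_one]
          gcongr
  · refine le_add_left ?_
    have hs' : s ^ (p - η) ≠ 0 := (rpow_pos (pos_iff_ne_zero.2 hs₀) hs).ne'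
    rcases eq_or_ne d ∞ with rfl | hd
    · rw [top_rpow_of_pos (by linarith : 0 < η), mul_top hs']
      exact le_top
    calc d ^ p = d ^ (p - η) * d ^ η := by
          rw [← rpow_add _ _ (pos_of_gt hsd).ne' hd, sub_add_cancel]
      _ ≤ s ^ (p - η) * d ^ η := by
          rw [← neg_sub η p, rpow_neg, rpow_neg]
          gcongr

theorem toReal_le_mul_add_of_le_add {a b c k m : ℝ≥0∞} (h : a ≤ c * b + k) (hb : b ≤ m + a)
    (hc : c ≠ ∞) (hk : k ≠ ∞) (hm : m ≠ ∞) : a.toReal ≤ c.toReal * b.toReal + k.toReal := by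
  rcases eq_or_ne a ∞ with rfl | ha
  · simp only [toReal_top]
    positivity
  have hb' : b ≠ ∞ := ne_top_of_le_ne_top (add_ne_top.2 ⟨hm, ha⟩) hb
  rw [← toReal_mul, ← toReal_add (mul_ne_top hc hb') hk]
  exact toReal_mono (add_ne_top.2 ⟨mul_ne_top hc hb', hk⟩) h

end ENNReal

section Wasserstein

variable {X : Type*} [MeasurableSpace X] [PseudoEMetricSpace X] {μ ν : Measure X}

theorem lintegral_edist_rpow_le_of_coupling {π : Measure (X × X)} (h₁ : π.map Prod.fst = μ)
    (h₂ : π.map Prod.snd = ν) (x₀ : X) {p η : ℝ} {s : ℝ≥0∞} (hs₀ : s ≠ 0) (hs : s ≠ ∞)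
    (hp : 1 ≤ p) (hpη : p ≤ η) (hμ : AEMeasurable (fun x => edist x x₀ ^ η) μ)
    (hν : AEMeasurable (fun x => edist x x₀ ^ η) ν) :
    ∫⁻ z, edist z.1 z.2 ^ p ∂π ≤ s ^ (p - 1) * ∫⁻ z, edist z.1 z.2 ∂π +
      s ^ (p - η) * 2 ^ (η - 1) * (∫⁻ x, edist x x₀ ^ η ∂μ + ∫⁻ x, edist x x₀ ^ η ∂ν) := by
  subst h₁ h₂
  have hμ' : AEMeasurable (fun z : X × X => edist z.1 x₀ ^ η) π :=
    hμ.comp_measurable measurable_fst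
  have hν' : AEMeasurable (fun z : X × X => edist z.2 x₀ ^ η) π :=
    hν.comp_measurable measurable_snd
  have hsum : AEMeasurable (fun z : X × X => edist z.1 x₀ ^ η + edist z.2 x₀ ^ η) π :=
    hμ'.add hν'
  calc ∫⁻ z, edist z.1 z.2 ^ p ∂π
      ≤ ∫⁻ z, s ^ (p - 1) * edist z.1 z.2 +
          s ^ (p - η) * 2 ^ (η - 1) * (edist z.1 x₀ ^ η + edist z.2 x₀ ^ η) ∂π := by
        refine lintegral_mono fun z => (ENNReal.rpow_le_mul_add_mul_rpow hs₀ hs hp hpη).trans ?_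
        rw [mul_assoc]
        gcongr
        exact (ENNReal.rpow_le_rpow (edist_triangle_right _ _ x₀) (by linarith)).trans
          (ENNReal.rpow_add_le_mul_rpow_add_rpow _ _ (hp.trans hpη))
    _ = _ := by
        rw [lintegral_add_right' _ (hsum.const_mul _),
          lintegral_const_mul' _ _ (ENNReal.rpow_ne_top_of_nonneg (by linarith) hs),
          lintegral_const_mul'' _ hsum, lintegral_add_left' hμ',
          lintegral_map' hμ measurable_fst.aemeasurable,
          lintegral_map' hν measurable_snd.aemeasurable]

theorem wassersteinE_rpow {p : ℝ} (hp : 0 < p) (μ ν : Measure X) :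
    wassersteinE p μ ν ^ p = ⨅ (π : Measure (X × X)) (_ : π.map Prod.fst = μ ∧ π.map Prod.snd = ν),
      ∫⁻ z, edist z.1 z.2 ^ p ∂π := by
  rw [wassersteinE, ← ENNReal.rpow_mul, one_div_mul_cancel hp.ne', ENNReal.rpow_one]

theorem wassersteinE_one (μ ν : Measure X) :
    wassersteinE 1 μ ν = ⨅ (π : Measure (X × X)) (_ : π.map Prod.fst = μ ∧ π.map Prod.snd = ν),
      ∫⁻ z, edist z.1 z.2 ∂π := by
  simpa using wassersteinE_rpow one_pos μ ν

theorem wassersteinE_rpow_le (x₀ : X) {p η : ℝ} {s : ℝ≥0∞} (hs₀ : s ≠ 0) (hs : s ≠ ∞)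
    (hp : 1 ≤ p) (hpη : p ≤ η) (hμ : AEMeasurable (fun x => edist x x₀ ^ η) μ)
    (hν : AEMeasurable (fun x => edist x x₀ ^ η) ν) :
    wassersteinE p μ ν ^ p ≤ s ^ (p - 1) * wassersteinE 1 μ ν +
      s ^ (p - η) * 2 ^ (η - 1) * (∫⁻ x, edist x x₀ ^ η ∂μ + ∫⁻ x, edist x x₀ ^ η ∂ν) := by
  have hs' : s ^ (p - 1) ≠ 0 := (ENNReal.rpow_pos (pos_iff_ne_zero.2 hs₀) hs).ne'
  have hs'' : s ^ (p - 1) ≠ ∞ := ENNReal.rpow_ne_top_of_nonneg (by linarith) hs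
  rw [wassersteinE_rpow (by linarith), wassersteinE_one, ENNReal.mul_iInf_of_ne hs' hs'',
    ENNReal.iInf_add]
  refine iInf_mono fun π => ?_
  rw [ENNReal.mul_iInf_of_ne hs' hs'', ENNReal.iInf_add]
  exact iInf_mono fun hπ =>
    lintegral_edist_rpow_le_of_coupling hπ.1 hπ.2 x₀ hs₀ hs hp hpη hμ hν

theorem wassersteinE_one_le {p : ℝ} (hp : 1 ≤ p) (μ ν : Measure X) :
    wassersteinE 1 μ ν ≤ μ Set.univ + wassersteinE p μ ν ^ p := by
  have le_one_add_rpow (e : ℝ≥0∞) : e ≤ 1 + e ^ p := by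
    rcases le_total e 1 with he | he
    · exact he.trans le_self_add
    · calc e = e ^ (1 : ℝ) := (ENNReal.rpow_one e).symm
        _ ≤ e ^ p := ENNReal.rpow_le_rpow_of_exponent_le he hp
        _ ≤ 1 + e ^ p := le_add_self
  rw [wassersteinE_rpow (by linarith), wassersteinE_one, ENNReal.add_iInf]
  refine iInf_mono fun π => ?_
  rw [ENNReal.add_iInf]
  refine iInf_mono fun hπ => ?_
  calc ∫⁻ z, edist z.1 z.2 ∂π ≤ ∫⁻ z, 1 + edist z.1 z.2 ^ p ∂π :=
        lintegral_mono fun z => le_one_add_rpow _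
    _ = μ Set.univ + ∫⁻ z, edist z.1 z.2 ^ p ∂π := by
        rw [lintegral_add_left measurable_const, lintegral_one, ← hπ.1,
          Measure.map_apply measurable_fst MeasurableSet.univ, Set.preimage_univ]

end Wasserstein

theorem edist_rpow_eq_ofReal_dist_rpow {X : Type*} [PseudoMetricSpace X] (x y : X) {η : ℝ}
    (hη : 0 ≤ η) : edist x y ^ η = ENNReal.ofReal (dist x y ^ η) := by
  rw [edist_dist, ENNReal.ofReal_rpow_of_nonneg dist_nonneg hη]

section Moments

variable {X : Type*} [MeasurableSpace X] [PseudoMetricSpace X] {ρ : Measure X} {x₀ : X} {η : ℝ}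

theorem MeasureTheory.Integrable.aemeasurable_edist_rpow
    (h : Integrable (fun x => dist x x₀ ^ η) ρ) (hη : 0 ≤ η) :
    AEMeasurable (fun x => edist x x₀ ^ η) ρ := by
  simpa only [edist_rpow_eq_ofReal_dist_rpow _ _ hη] using h.aemeasurable.ennreal_ofReal

theorem MeasureTheory.Integrable.lintegral_edist_rpow
    (h : Integrable (fun x => dist x x₀ ^ η) ρ) (hη : 0 ≤ η) :
    ∫⁻ x, edist x x₀ ^ η ∂ρ = ENNReal.ofReal (∫ x, dist x x₀ ^ η ∂ρ) := by
  simp only [edist_rpow_eq_ofReal_dist_rpow _ _ hη]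
  exact (ofReal_integral_eq_lintegral_ofReal h (ae_of_all _ fun x => by positivity)).symm

end Moments

theorem two_mul_rpow_mul_two_rpow_le {t p η : ℝ} (ht : 0 < t) :
    (2 * t) ^ (p - η) * 2 ^ (η - 1) ≤ 2 ^ (p + 1) * t ^ (p - η) := by
  rw [Real.mul_rpow zero_le_two ht.le, mul_right_comm, ← Real.rpow_add zero_lt_two]
  exact mul_le_mul_of_nonneg_right (Real.rpow_le_rpow_of_exponent_le one_le_two (by linarith))
    (by positivity)

theorem Wp_le_of_W1_and_moments_general
    {X : Type*} [MeasurableSpace X] [MetricSpace X]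
    (x₀ : X) (η p : ℝ) (hp1 : 1 ≤ p) (hpη : p ≤ η)
    (μ ν : Measure X) [IsProbabilityMeasure μ]
    (hμ : Integrable (fun x => dist x x₀ ^ η) μ)
    (hν : Integrable (fun x => dist x x₀ ^ η) ν) :
    ∀ t : ℝ, 0 < t →
      wasserstein p μ ν ^ p ≤
        (2 * t) ^ (p - 1) * wasserstein 1 μ ν +
          2 ^ (p + 1) * t ^ (p - η) *
            ((∫ x, dist x x₀ ^ η ∂μ) + ∫ x, dist x x₀ ^ η ∂ν) := by
  intro t ht
  have hη : 0 ≤ η := by linarith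
  have hWp := wassersteinE_rpow_le x₀ (s := ENNReal.ofReal (2 * t)) (by simpa using ht)
    ENNReal.ofReal_ne_top hp1 hpη (hμ.aemeasurable_edist_rpow hη)
    (hν.aemeasurable_edist_rpow hη)
  rw [hμ.lintegral_edist_rpow hη, hν.lintegral_edist_rpow hη] at hWp
  have hW1 := wassersteinE_one_le hp1 μ ν
  rw [measure_univ] at hW1
  have hreal := ENNReal.toReal_le_mul_add_of_le_add hWp hW1 (by finiteness) (by finiteness)
    ENNReal.one_ne_top
  rw [wasserstein, wasserstein, ENNReal.toReal_rpow]
  refine hreal.trans ?_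
  have hMμ : 0 ≤ ∫ x, dist x x₀ ^ η ∂μ := integral_nonneg fun x => by positivity
  have hMν : 0 ≤ ∫ x, dist x x₀ ^ η ∂ν := integral_nonneg fun x => by positivity
  simp only [ENNReal.toReal_mul, ← ENNReal.toReal_rpow, ENNReal.toReal_ofNat,
    ENNReal.toReal_add ENNReal.ofReal_ne_top ENNReal.ofReal_ne_top,
    ENNReal.toReal_ofReal (by positivity : 0 ≤ 2 * t), ENNReal.toReal_ofReal hMμ,
    ENNReal.toReal_ofReal hMν]
  gcongr _ + ?_ * _
  exact two_mul_rpow_mul_two_rpow_le ht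

theorem Wp_le_of_W1_and_moments
    {X : Type*} [MeasurableSpace X] [MetricSpace X] [BorelSpace X] [PolishSpace X]
    (x₀ : X) (η p : ℝ) (hη : 1 ≤ η) (hp1 : 1 ≤ p) (hpη : p ≤ η)
    (μ ν : Measure X) [IsProbabilityMeasure μ] [IsProbabilityMeasure ν]
    (hμ : Integrable (fun x => dist x x₀ ^ η) μ)
    (hν : Integrable (fun x => dist x x₀ ^ η) ν) :
    ∀ t : ℝ, 0 < t →
      wasserstein p μ ν ^ p ≤
        (2 * t) ^ (p - 1) * wasserstein 1 μ ν +
          2 ^ (p + 1) * t ^ (p - η) *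
            ((∫ x, dist x x₀ ^ η ∂μ) + ∫ x, dist x x₀ ^ η ∂ν) :=
  Wp_le_of_W1_and_moments_general x₀ η p hp1 hpη μ ν hμ hν
end

section
/- Let ν be a Lévy kernel on ℝⁿ and θ ∈ (0,1) with θ ∈ Θ_ν and tail condition (T_θ). Let f ∈ C²(ℝⁿ) satisfy sup_{|x|≥1} |x|^{−θ} max(|f(x)|, |x|·|∇f(x)|, |x|²·‖∇²f(x)‖) < ∞. Then 𝔍_{1,ν}[f](x) → 0 as |x| → ∞. -/
open MeasureTheory Filter ENNReal

noncomputable def levyJ1 {n : ℕ}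
    (ν : EuclideanSpace ℝ (Fin n) → Measure (EuclideanSpace ℝ (Fin n)))
    (f : EuclideanSpace ℝ (Fin n) → ℝ) (x : EuclideanSpace ℝ (Fin n)) : ℝ :=
  ∫ y, (f (x + y) - f x - (if ‖y‖ < 1 then fderiv ℝ f x y else 0)) ∂(ν x)

/-- `ν` is a Lévy kernel on `ℝⁿ`. -/
def IsLevyKernel {n : ℕ}
    (ν : EuclideanSpace ℝ (Fin n) → Measure (EuclideanSpace ℝ (Fin n))) : Prop :=
  ∀ x, ν x {0} = 0 ∧ (∫⁻ y, ENNReal.ofReal (min 1 (‖y‖ ^ 2)) ∂(ν x)) ≠ ⊤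

/-- `θ ∈ Θ_ν`. -/
def MomentCondition {n : ℕ}
    (ν : EuclideanSpace ℝ (Fin n) → Measure (EuclideanSpace ℝ (Fin n))) (θ : ℝ) : Prop :=
  ∃ M : ℝ≥0∞, M ≠ ⊤ ∧ ∀ x,
    (∫⁻ y, ENNReal.ofReal (if ‖y‖ < 1 then ‖y‖ ^ 2 else ‖y‖ ^ θ) ∂(ν x)) ≤ M

/-- Tail condition (T_θ): `lim_{r→∞} sup_x ∫_{|y|>r} |y|^θ ν(x,dy) = 0`. -/
def TailCondition {n : ℕ}
    (ν : EuclideanSpace ℝ (Fin n) → Measure (EuclideanSpace ℝ (Fin n))) (θ : ℝ) : Prop :=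
  Tendsto (fun r : ℝ => ⨆ x, ∫⁻ y in {y | r < ‖y‖}, ENNReal.ofReal (‖y‖ ^ θ) ∂(ν x))
    atTop (nhds 0)

/-! Split the jumps `y` at the radius `δ ‖x‖`, `δ` small. For `‖y‖ < 1`, Taylor's formula and
`‖∇²f‖ ≲ ‖x‖ ^ (θ - 2) ≲ 1 / ‖x‖` on `B(x, ‖x‖ / 2)` bound the integrand by `‖y‖² / ‖x‖`;
for `1 ≤ ‖y‖ ≤ δ ‖x‖`, the mean value theorem and `‖∇f‖ ≲ ‖x‖ ^ (θ - 1)` bound it by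
`δ ^ (1 - θ) ‖y‖ ^ θ`; beyond `δ ‖x‖` it is `O_δ(‖y‖ ^ θ)`. The uniform moment bound makes the
first two contributions small, and the tail condition makes the last one small once `δ ‖x‖` is
large. -/

open Metric Bornology Topology

section KernelIntegral

variable {X E F : Type*} [NormedAddCommGroup E] [MeasurableSpace E] [OpensMeasurableSpace E]
  [NormedAddCommGroup F] {w : E → ℝ}

theorem lintegral_norm_le_of_le_mul_weight (μ : Measure E) (hw : Measurable w) {g : E → F}
    {ε C ρ : ℝ} (hε : 0 ≤ ε) (hC : 0 ≤ C) (hnear : ∀ y, ‖y‖ ≤ ρ → ‖g y‖ ≤ ε * w y)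
    (hfar : ∀ y, ρ < ‖y‖ → ‖g y‖ ≤ C * w y) :
    ∫⁻ y, ENNReal.ofReal ‖g y‖ ∂μ ≤ ENNReal.ofReal ε * ∫⁻ y, ENNReal.ofReal (w y) ∂μ +
      ENNReal.ofReal C * ∫⁻ y in {y | ρ < ‖y‖}, ENNReal.ofReal (w y) ∂μ := by
  set S := {y : E | ρ < ‖y‖}
  have hS : MeasurableSet S := measurableSet_lt measurable_const measurable_norm
  calc ∫⁻ y, ENNReal.ofReal ‖g y‖ ∂μ ≤ ∫⁻ y, (ENNReal.ofReal ε * ENNReal.ofReal (w y) +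
        ENNReal.ofReal C * S.indicator (fun y => ENNReal.ofReal (w y)) y) ∂μ := by
        refine lintegral_mono fun y => ?_
        by_cases hy : y ∈ S
        · rw [Set.indicator_of_mem hy, ← ENNReal.ofReal_mul hC]
          exact (ENNReal.ofReal_le_ofReal (hfar y hy)).trans le_add_self
        · rw [← ENNReal.ofReal_mul hε]
          exact (ENNReal.ofReal_le_ofReal (hnear y (not_lt.1 hy))).trans le_self_add
    _ = _ := by
        rw [lintegral_add_left (hw.ennreal_ofReal.const_mul _),
          lintegral_const_mul' _ _ ofReal_ne_top, lintegral_const_mul' _ _ ofReal_ne_top,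
          lintegral_indicator hS]

theorem tendsto_integral_of_bounded_moment_of_tail [NormedSpace ℝ F] {l : Filter X}
    {μ : X → Measure E} (hw : Measurable w) {g : X → E → F}
    (hmom : ∃ M : ℝ≥0∞, M ≠ ⊤ ∧ ∀ x, ∫⁻ y, ENNReal.ofReal (w y) ∂μ x ≤ M)
    (htail : Tendsto (fun r : ℝ => ⨆ x, ∫⁻ y in {y | r < ‖y‖}, ENNReal.ofReal (w y) ∂μ x)
      atTop (𝓝 0))
    (hg : ∀ ε > 0, ∃ C ≥ 0, ∃ ρ : X → ℝ, Tendsto ρ l atTop ∧ ∀ᶠ x in l, ∀ y,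
      (‖y‖ ≤ ρ x → ‖g x y‖ ≤ ε * w y) ∧ (ρ x < ‖y‖ → ‖g x y‖ ≤ C * w y)) :
    Tendsto (fun x => ∫ y, g x y ∂μ x) l (𝓝 0) := by
  obtain ⟨M, hM, hmom⟩ := hmom
  suffices h : Tendsto (fun x => ∫⁻ y, ENNReal.ofReal ‖g x y‖ ∂μ x) l (𝓝 0) by
    refine squeeze_zero_norm (fun x => norm_integral_le_lintegral_norm (g x)) ?_
    simpa [Function.comp_def] using (ENNReal.tendsto_toReal zero_ne_top).comp h
  rw [ENNReal.tendsto_nhds_zero]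
  intro η hη
  have hεM : Tendsto (fun ε : ℝ => ENNReal.ofReal ε * M) (𝓝[>] 0) (𝓝 0) := by
    simpa using (ENNReal.Tendsto.mul_const (ENNReal.tendsto_ofReal tendsto_id)
      (Or.inr hM)).mono_left (nhdsWithin_le_nhds (a := (0 : ℝ)))
  obtain ⟨ε, hεη, hε⟩ := ((hεM.eventually (gt_mem_nhds (ENNReal.half_pos hη.ne'))).and
    self_mem_nhdsWithin).exists
  obtain ⟨C, hC, ρ, hρ, hbound⟩ := hg ε hε
  have htailρ : Tendsto (fun x => ENNReal.ofReal C *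
      ⨆ x', ∫⁻ y in {y | ρ x < ‖y‖}, ENNReal.ofReal (w y) ∂μ x') l (𝓝 0) := by
    simpa using ENNReal.Tendsto.const_mul (htail.comp hρ) (Or.inr ofReal_ne_top)
  filter_upwards [hbound, htailρ.eventually (gt_mem_nhds (ENNReal.half_pos hη.ne'))]
    with x hx hxtail
  calc ∫⁻ y, ENNReal.ofReal ‖g x y‖ ∂μ x ≤ ENNReal.ofReal ε * M + ENNReal.ofReal C *
        ⨆ x', ∫⁻ y in {y | ρ x < ‖y‖}, ENNReal.ofReal (w y) ∂μ x' := by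
        refine (lintegral_norm_le_of_le_mul_weight (μ x) hw hε.le hC (fun y => (hx y).1)
          (fun y => (hx y).2)).trans ?_
        gcongr
        · exact hmom x
        · exact le_iSup (fun x' => ∫⁻ y in {y | ρ x < ‖y‖}, ENNReal.ofReal (w y) ∂μ x') x
    _ ≤ η / 2 + η / 2 := add_le_add hεη.le hxtail.le
    _ = η := ENNReal.add_halves η

end KernelIntegral

theorem half_norm_le_norm_of_mem_closedBall {E : Type*} [SeminormedAddCommGroup E] {x z : E}
    (hz : z ∈ closedBall x (‖x‖ / 2)) : ‖x‖ / 2 ≤ ‖z‖ := by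
  have := norm_sub_norm_le x z
  rw [mem_closedBall_iff_norm'] at hz
  linarith

section Growth

variable {E F : Type*} [NormedAddCommGroup E] [NormedAddCommGroup F]

theorem norm_add_sub_le_of_norm_le_one_add_rpow {f : E → F} {θ A K : ℝ} (hθ : 0 ≤ θ)
    (hA : ∀ z, ‖f z‖ ≤ A * (1 + ‖z‖) ^ θ) {x y : E} (hy : 1 ≤ ‖y‖) (hxy : ‖x‖ ≤ K * ‖y‖) :
    ‖f (x + y) - f x‖ ≤ 2 * A * (K + 2) ^ θ * ‖y‖ ^ θ := by
  have hA0 : 0 ≤ A := by simpa using (norm_nonneg _).trans (hA 0)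
  have hK : 0 ≤ K := nonneg_of_mul_nonneg_left ((norm_nonneg x).trans hxy) (by linarith)
  have hbound : ∀ z : E, 1 + ‖z‖ ≤ (K + 2) * ‖y‖ → ‖f z‖ ≤ A * (K + 2) ^ θ * ‖y‖ ^ θ :=
    fun z hz => by
      rw [mul_assoc, ← Real.mul_rpow (by linarith) (by linarith)]
      exact (hA z).trans (by gcongr)
  calc ‖f (x + y) - f x‖ ≤ ‖f (x + y)‖ + ‖f x‖ := norm_sub_le _ _
    _ ≤ _ := by
        have := norm_add_le x y
        linarith [hbound (x + y) (by linarith), hbound x (by linarith)]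

theorem exists_norm_le_mul_one_add_norm_rpow [ProperSpace E] {f : E → F} {θ M : ℝ}
    (hf : Continuous f) (hθ : 0 ≤ θ) (hgrowth : ∀ z, 1 ≤ ‖z‖ → ‖f z‖ ≤ M * ‖z‖ ^ θ) :
    ∃ A, ∀ z, ‖f z‖ ≤ A * (1 + ‖z‖) ^ θ := by
  obtain ⟨C, hC⟩ := (isCompact_closedBall (0 : E) 1).exists_bound_of_continuousOn hf.continuousOn
  refine ⟨max C M, fun z => ?_⟩
  have hz1 : 1 ≤ (1 + ‖z‖) ^ θ := Real.one_le_rpow (by linarith [norm_nonneg z]) hθ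
  rcases le_or_gt ‖z‖ 1 with hz | hz
  · have hCz : ‖f z‖ ≤ C := hC z (by simpa using hz)
    calc ‖f z‖ ≤ max C M := hCz.trans (le_max_left _ _)
      _ ≤ max C M * (1 + ‖z‖) ^ θ :=
        le_mul_of_one_le_right ((norm_nonneg _).trans (hCz.trans (le_max_left _ _))) hz1
  · have hM : 0 ≤ M := nonneg_of_mul_nonneg_left
      ((norm_nonneg _).trans (hgrowth z hz.le)) (by positivity)
    calc ‖f z‖ ≤ M * ‖z‖ ^ θ := hgrowth z hz.le
      _ ≤ max C M * (1 + ‖z‖) ^ θ := by gcongr; exacts [le_max_right _ _, by linarith]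

end Growth

section MeanValue

variable {E F : Type*} [NormedAddCommGroup E] [NormedSpace ℝ E]
  [NormedAddCommGroup F] [NormedSpace ℝ F]

theorem norm_add_sub_sub_fderiv_le {f : E → F} {x y : E} {r K : ℝ}
    (hf : ∀ z ∈ closedBall x r, DifferentiableAt ℝ f z)
    (hf' : ∀ z ∈ closedBall x r, DifferentiableAt ℝ (fderiv ℝ f) z)
    (hK : ∀ z ∈ closedBall x r, ‖fderiv ℝ (fderiv ℝ f) z‖ ≤ K) (hy : ‖y‖ ≤ r) :
    ‖f (x + y) - f x - fderiv ℝ f x y‖ ≤ K * ‖y‖ ^ 2 := by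
  have hx : x ∈ closedBall x ‖y‖ := mem_closedBall_self (norm_nonneg y)
  have hxy : x + y ∈ closedBall x ‖y‖ := by simp [dist_eq_norm]
  have hsub : closedBall x ‖y‖ ⊆ closedBall x r := closedBall_subset_closedBall hy
  have hK0 : 0 ≤ K := (norm_nonneg (fderiv ℝ (fderiv ℝ f) x)).trans (hK x (hsub hx))
  have hlip : ∀ z ∈ closedBall x ‖y‖, ‖fderiv ℝ f z - fderiv ℝ f x‖ ≤ K * ‖y‖ := fun z hz =>
    ((convex_closedBall x ‖y‖).norm_image_sub_le_of_norm_fderiv_le (fun w hw => hf' w (hsub hw))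
      (fun w hw => hK w (hsub hw)) hx hz).trans
      (mul_le_mul_of_nonneg_left (mem_closedBall_iff_norm.1 hz) hK0)
  have := (convex_closedBall x ‖y‖).norm_image_sub_le_of_norm_fderiv_le'
    (fun w hw => hf w (hsub hw)) hlip hx hxy
  simpa [sq, mul_assoc] using this

theorem norm_add_sub_sub_fderiv_le_of_hessian_growth {f : E → F} {θ M : ℝ}
    (hf : ContDiff ℝ 2 f) (hθ : θ ≤ 1)
    (hgrowth : ∀ z, 1 ≤ ‖z‖ → ‖z‖ ^ 2 * ‖fderiv ℝ (fderiv ℝ f) z‖ ≤ M * ‖z‖ ^ θ)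
    {x y : E} (hx : 2 ≤ ‖x‖) (hy : ‖y‖ ≤ 1) :
    ‖f (x + y) - f x - fderiv ℝ f x y‖ ≤ 2 * M / ‖x‖ * ‖y‖ ^ 2 := by
  refine norm_add_sub_sub_fderiv_le (r := ‖x‖ / 2) (fun z _ => hf.differentiable (by norm_num) z)
    (fun z _ => (hf.fderiv_right (m := 1) (by norm_num)).differentiable (by norm_num) z)
    (fun z hz => ?_) (by linarith)
  have hxz := half_norm_le_norm_of_mem_closedBall hz
  have hz1 : 1 ≤ ‖z‖ := by linarith
  have hzθ : ‖z‖ ^ θ ≤ ‖z‖ := Real.rpow_le_self_of_one_le hz1 hθ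
  have hM : 0 ≤ M := nonneg_of_mul_nonneg_left ((by positivity : (0:ℝ) ≤ _).trans (hgrowth z hz1))
    (by positivity)
  have hzH : ‖z‖ * ‖fderiv ℝ (fderiv ℝ f) z‖ ≤ M := by
    have := (hgrowth z hz1).trans (mul_le_mul_of_nonneg_left hzθ hM)
    nlinarith
  rw [le_div_iff₀ (by linarith)]
  nlinarith [norm_nonneg (fderiv ℝ (fderiv ℝ f) z)]

theorem norm_add_sub_le_of_fderiv_growth {f : E → F} {θ M δ : ℝ} (hf : Differentiable ℝ f)
    (hθ : θ ≤ 1) (hgrowth : ∀ z, 1 ≤ ‖z‖ → ‖z‖ * ‖fderiv ℝ f z‖ ≤ M * ‖z‖ ^ θ)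
    {x y : E} (hy : 1 ≤ ‖y‖) (hyx : ‖y‖ ≤ δ * ‖x‖) (hδ : δ ≤ 1 / 2) :
    ‖f (x + y) - f x‖ ≤ M * (2 * δ) ^ (1 - θ) * ‖y‖ ^ θ := by
  set a := ‖x‖ / 2 with ha_def
  have hya : ‖y‖ ≤ a := hyx.trans (by nlinarith [mul_le_mul_of_nonneg_right hδ (norm_nonneg x)])
  have hxy : x + y ∈ closedBall x a := by simpa [dist_eq_norm] using hya
  have ha : 0 < a := by linarith
  have hM : 0 ≤ M := nonneg_of_mul_nonneg_left
    ((by positivity : (0:ℝ) ≤ _).trans (hgrowth y hy)) (by positivity)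
  have hderiv : ∀ z ∈ closedBall x a, ‖fderiv ℝ f z‖ ≤ M * a ^ (θ - 1) := fun z hz => by
    have hz := half_norm_le_norm_of_mem_closedBall hz
    have hz0 : 0 < ‖z‖ := by linarith
    calc ‖fderiv ℝ f z‖ ≤ M * ‖z‖ ^ (θ - 1) := by
          rw [Real.rpow_sub_one hz0.ne', mul_div_assoc', le_div_iff₀ hz0, mul_comm]
          exact hgrowth z (by linarith)
      _ ≤ M * a ^ (θ - 1) :=
          mul_le_mul_of_nonneg_left (Real.rpow_le_rpow_of_nonpos ha hz (by linarith)) hM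
  have hmvt := (convex_closedBall x a).norm_image_sub_le_of_norm_fderiv_le
    (fun z _ => hf z) hderiv (mem_closedBall_self ha.le) hxy
  rw [add_sub_cancel_left] at hmvt
  refine hmvt.trans ?_
  have hy0 : 0 < ‖y‖ := by linarith
  have hsplit : a ^ (θ - 1) * ‖y‖ = (‖y‖ / a) ^ (1 - θ) * ‖y‖ ^ θ := by
    rw [Real.div_rpow hy0.le ha.le, div_mul_eq_mul_div, ← Real.rpow_add hy0, sub_add_cancel,
      Real.rpow_one, show θ - 1 = -(1 - θ) by ring, Real.rpow_neg ha.le, inv_mul_eq_div]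
  calc M * a ^ (θ - 1) * ‖y‖ = M * (‖y‖ / a) ^ (1 - θ) * ‖y‖ ^ θ := by
        rw [mul_assoc, hsplit, mul_assoc]
    _ ≤ M * (2 * δ) ^ (1 - θ) * ‖y‖ ^ θ := by
        gcongr
        rw [div_le_iff₀ ha, ha_def]
        linarith

end MeanValue

theorem exists_mem_Ioc_mul_two_mul_rpow_le (M : ℝ) {p ε : ℝ} (hp : 0 < p) (hε : 0 < ε) :
    ∃ δ ∈ Set.Ioc 0 (1 / 2), M * (2 * δ) ^ p ≤ ε := by
  have hcont : Continuous fun δ : ℝ => M * (2 * δ) ^ p :=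
    continuous_const.mul ((continuous_const.mul continuous_id).rpow_const fun _ => Or.inr hp.le)
  have hsmall : Tendsto (fun δ : ℝ => M * (2 * δ) ^ p) (𝓝[>] 0) (𝓝 0) := by
    simpa [Real.zero_rpow hp.ne'] using (hcont.tendsto 0).mono_left nhdsWithin_le_nhds
  obtain ⟨δ, hδε, hδ⟩ := ((hsmall.eventually (ge_mem_nhds hε)).and
    (Ioc_mem_nhdsGT (by norm_num : (0 : ℝ) < 1 / 2))).exists
  exact ⟨δ, hδ, hδε⟩

/-- The weight of `Θ_ν`, as in `MomentCondition`. -/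
noncomputable def levyWeight {E : Type*} [NormedAddCommGroup E] (θ : ℝ) (y : E) : ℝ :=
  if ‖y‖ < 1 then ‖y‖ ^ 2 else ‖y‖ ^ θ

theorem measurable_levyWeight {E : Type*} [NormedAddCommGroup E] [MeasurableSpace E]
    [OpensMeasurableSpace E] (θ : ℝ) : Measurable (levyWeight (E := E) θ) :=
  Measurable.ite (measurableSet_lt measurable_norm measurable_const) (by fun_prop) (by fun_prop)

section LevyIntegrand

variable {E F : Type*} [NormedAddCommGroup E] [NormedSpace ℝ E]
  [NormedAddCommGroup F] [NormedSpace ℝ F]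

/-- `𝔡₁f(x; y)`, the integrand of `levyJ1`. -/
noncomputable def compensatedIncrement (f : E → F) (x y : E) : F :=
  f (x + y) - f x - if ‖y‖ < 1 then fderiv ℝ f x y else 0

theorem exists_bound_compensatedIncrement [ProperSpace E] {f : E → F} {θ M : ℝ}
    (hf : ContDiff ℝ 2 f) (hθ0 : 0 ≤ θ) (hθ1 : θ < 1)
    (hgrowth : ∀ z, 1 ≤ ‖z‖ → ‖f z‖ ≤ M * ‖z‖ ^ θ ∧ ‖z‖ * ‖fderiv ℝ f z‖ ≤ M * ‖z‖ ^ θ ∧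
      ‖z‖ ^ 2 * ‖fderiv ℝ (fderiv ℝ f) z‖ ≤ M * ‖z‖ ^ θ)
    {ε : ℝ} (hε : 0 < ε) :
    ∃ C ≥ 0, ∃ δ > 0, ∀ᶠ x in cobounded E, ∀ y,
      (‖y‖ ≤ δ * ‖x‖ → ‖compensatedIncrement f x y‖ ≤ ε * levyWeight θ y) ∧
      (δ * ‖x‖ < ‖y‖ → ‖compensatedIncrement f x y‖ ≤ C * levyWeight θ y) := by
  obtain ⟨A, hA⟩ := exists_norm_le_mul_one_add_norm_rpow hf.continuous hθ0
    fun z hz => (hgrowth z hz).1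
  have hA0 : 0 ≤ A := by simpa using (norm_nonneg _).trans (hA 0)
  obtain ⟨δ, ⟨hδ0, hδ2⟩, hδε⟩ := exists_mem_Ioc_mul_two_mul_rpow_le M (by linarith : 0 < 1 - θ) hε
  refine ⟨2 * A * (δ⁻¹ + 2) ^ θ, by positivity, δ, hδ0, ?_⟩
  filter_upwards [eventually_cobounded_le_norm (max 2 (max (2 * M / ε) δ⁻¹))] with x hx y
  simp only [max_le_iff] at hx
  have hδx : 1 ≤ δ * ‖x‖ := by rw [← inv_mul_le_iff₀ hδ0]; simpa using hx.2.2
  constructor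
  · intro hyx
    by_cases hy : ‖y‖ < 1
    · simp only [compensatedIncrement, levyWeight, if_pos hy]
      refine (norm_add_sub_sub_fderiv_le_of_hessian_growth hf hθ1.le
        (fun z hz => (hgrowth z hz).2.2) hx.1 hy.le).trans ?_
      gcongr
      rw [div_le_iff₀ (by linarith)]
      linarith [(div_le_iff₀ hε).1 hx.2.1]
    · simp only [compensatedIncrement, levyWeight, if_neg hy, sub_zero]
      exact (norm_add_sub_le_of_fderiv_growth (hf.differentiable (by norm_num)) hθ1.le
        (fun z hz => (hgrowth z hz).2.1) (not_lt.1 hy) hyx hδ2).trans (by gcongr)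
  · intro hyx
    have hy : ¬‖y‖ < 1 := by linarith
    simp only [compensatedIncrement, levyWeight, if_neg hy, sub_zero]
    refine norm_add_sub_le_of_norm_le_one_add_rpow hθ0 hA (not_lt.1 hy) ?_
    rw [← div_eq_inv_mul, le_div_iff₀' hδ0]
    exact hyx.le

end LevyIntegrand

theorem TailCondition.tendsto_levyWeight {n : ℕ}
    {ν : EuclideanSpace ℝ (Fin n) → Measure (EuclideanSpace ℝ (Fin n))} {θ : ℝ}
    (h : TailCondition ν θ) :
    Tendsto (fun r : ℝ => ⨆ x, ∫⁻ y in {y | r < ‖y‖}, ENNReal.ofReal (levyWeight θ y) ∂ν x)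
      atTop (𝓝 0) := by
  refine h.congr' ?_
  filter_upwards [eventually_ge_atTop 1] with r hr
  refine iSup_congr fun x => setLIntegral_congr_fun
    (measurableSet_lt measurable_const measurable_norm) fun y hy => ?_
  rw [levyWeight, if_neg (not_lt.2 (hr.trans (le_of_lt hy)))]

theorem levyJ1_vanishes_at_infinity_general {n : ℕ}
    (ν : EuclideanSpace ℝ (Fin n) → Measure (EuclideanSpace ℝ (Fin n)))
    (θ : ℝ) (hθ0 : 0 < θ) (hθ1 : θ < 1)
    (hmom : MomentCondition ν θ) (htail : TailCondition ν θ)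
    (f : EuclideanSpace ℝ (Fin n) → ℝ) (hf : ContDiff ℝ 2 f)
    (hgrowth : ∃ M : ℝ, ∀ x : EuclideanSpace ℝ (Fin n), 1 ≤ ‖x‖ →
      |f x| ≤ M * ‖x‖ ^ θ ∧ ‖x‖ * ‖fderiv ℝ f x‖ ≤ M * ‖x‖ ^ θ ∧
        ‖x‖ ^ 2 * ‖fderiv ℝ (fderiv ℝ f) x‖ ≤ M * ‖x‖ ^ θ) :
    Tendsto (levyJ1 ν f) (Bornology.cobounded _) (nhds 0) := by
  obtain ⟨M, hM⟩ := hgrowth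
  show Tendsto (fun x => ∫ y, compensatedIncrement f x y ∂ν x) _ _
  refine tendsto_integral_of_bounded_moment_of_tail (measurable_levyWeight θ) hmom
    htail.tendsto_levyWeight fun ε hε => ?_
  obtain ⟨C, hC, δ, hδ, hbound⟩ := exists_bound_compensatedIncrement hf hθ0.le hθ1 hM hε
  exact ⟨C, hC, (δ * ‖·‖), tendsto_norm_cobounded_atTop.const_mul_atTop hδ, hbound⟩

theorem levyJ1_vanishes_at_infinity {n : ℕ}
    (ν : EuclideanSpace ℝ (Fin n) → Measure (EuclideanSpace ℝ (Fin n)))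
    (hν : IsLevyKernel ν)
    (θ : ℝ) (hθ0 : 0 < θ) (hθ1 : θ < 1)
    (hmom : MomentCondition ν θ) (htail : TailCondition ν θ)
    (f : EuclideanSpace ℝ (Fin n) → ℝ) (hf : ContDiff ℝ 2 f)
    (hgrowth : ∃ M : ℝ, ∀ x : EuclideanSpace ℝ (Fin n), 1 ≤ ‖x‖ →
      |f x| ≤ M * ‖x‖ ^ θ ∧ ‖x‖ * ‖fderiv ℝ f x‖ ≤ M * ‖x‖ ^ θ ∧
        ‖x‖ ^ 2 * ‖fderiv ℝ (fderiv ℝ f) x‖ ≤ M * ‖x‖ ^ θ) :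
    Tendsto (levyJ1 ν f) (Bornology.cobounded _) (nhds 0) :=
  levyJ1_vanishes_at_infinity_general ν θ hθ0 hθ1 hmom htail f hf hgrowth
end

section
/- Let ν be a Lévy kernel on ℝⁿ and θ ≥ 1 with θ ∈ Θ_ν and tail condition (T_θ). Let f ∈ C²(ℝⁿ) satisfy sup_{|x|≥1} |x|^{1−θ} max(|∇f(x)|, |x|·‖∇²f(x)‖) < ∞. Then: if θ ∈ [1,2), 𝔍_ν[f](x) → 0 as |x| → ∞; and if θ ≥ 2, the function x ↦ (1+|x|)^{2−θ} · 𝔍_ν[f](x) is bounded on ℝⁿ. -/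
open MeasureTheory Filter ENNReal

noncomputable def levyJ {n : ℕ}
    (ν : EuclideanSpace ℝ (Fin n) → Measure (EuclideanSpace ℝ (Fin n)))
    (f : EuclideanSpace ℝ (Fin n) → ℝ) (x : EuclideanSpace ℝ (Fin n)) : ℝ :=
  ∫ y, (f (x + y) - f x - fderiv ℝ f x y) ∂(ν x)

/-!
Write `⟨x⟩ = max 1 ‖x‖` and `𝔡f(x;y) = taylorRemainder f x y`. By the growth hypothesis,
`f`, `∇f`, `∇²f` are `O(⟨w⟩^θ)`, `O(⟨w⟩^(θ-1))`, `O(⟨w⟩^(θ-2))`. Since `⟨w⟩ ≍ ⟨x⟩` on the ball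
of radius `⟨x⟩/2` about `x`, Taylor's formula gives `𝔡f(x;y) = O(⟨x⟩^(θ-2) |y|²)` for
`|y| ≤ ⟨x⟩/2`, while bounding the three terms of `𝔡f` separately gives `𝔡f(x;y) = O(|y|^θ)`
for larger `y`.

For `θ ≥ 2` both bounds are `O(⟨x⟩^(θ-2))` times the weight `momentWeight θ y` defining `Θ_ν`, so
`𝔍_ν[f](x) = O(⟨x⟩^(θ-2))`. For `θ < 2`, splitting the integral at `|y| = r ≤ ⟨x⟩/2` gives
`|𝔍_ν[f](x)| ≲ r^(2-θ) ⟨x⟩^(θ-2) + sup_z ∫_{|y|>r} |y|^θ ν(z,dy)`; let `|x| → ∞`, then `r → ∞`.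
-/

open Metric Bornology Topology

theorem rpow_le_two_rpow_abs_mul_rpow {a b q : ℝ} (hb : 0 < b) (hab : b / 2 ≤ a)
    (hab' : a ≤ 2 * b) : a ^ q ≤ 2 ^ |q| * b ^ q := by
  rcases le_total 0 q with hq | hq
  · calc a ^ q ≤ (2 * b) ^ q := Real.rpow_le_rpow (by linarith) hab' hq
      _ = 2 ^ |q| * b ^ q := by rw [abs_of_nonneg hq, Real.mul_rpow zero_le_two hb.le]
  · calc a ^ q ≤ (b / 2) ^ q := Real.rpow_le_rpow_of_nonpos (by positivity) hab hq
      _ = 2 ^ |q| * b ^ q := by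
        rw [abs_of_nonpos hq, Real.div_rpow hb.le zero_le_two, Real.rpow_neg zero_le_two]
        ring

theorem le_mul_rpow_of_rpow_neg_mul_le {t a M q : ℝ} (ht : 0 < t) (h : t ^ (-q) * a ≤ M) :
    a ≤ M * t ^ q := by
  rwa [Real.rpow_neg ht.le, inv_mul_le_iff₀ (Real.rpow_pos_of_pos ht q), mul_comm] at h

theorem rpow_sub_two_mul_sq_le {a t θ : ℝ} (ht : 0 ≤ t) (hta : t ≤ a) (hθ : θ ≤ 2) :
    a ^ (θ - 2) * t ^ 2 ≤ t ^ θ := by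
  rcases ht.eq_or_lt with rfl | ht
  · simpa using Real.rpow_nonneg le_rfl θ
  · calc a ^ (θ - 2) * t ^ 2 ≤ t ^ (θ - 2) * t ^ 2 :=
          mul_le_mul_of_nonneg_right
            (Real.rpow_le_rpow_of_nonpos ht hta (by linarith)) (by positivity)
      _ = t ^ θ := by rw [← Real.rpow_two, ← Real.rpow_add ht, sub_add_cancel]

section Remainder

variable {E F : Type*} [NormedAddCommGroup E] [NormedAddCommGroup F]

theorem nonneg_of_norm_le_mul_max_one_rpow {g : E → F} {C p : ℝ}
    (h : ∀ w, ‖g w‖ ≤ C * max 1 ‖w‖ ^ p) : 0 ≤ C := by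
  simpa using (norm_nonneg _).trans (h 0)

theorem exists_norm_le_mul_max_one_rpow [ProperSpace E] {g : E → F} (hg : Continuous g)
    {p M : ℝ} (hM : ∀ x, 1 ≤ ‖x‖ → ‖g x‖ ≤ M * ‖x‖ ^ p) :
    ∃ C, ∀ x, ‖g x‖ ≤ C * max 1 ‖x‖ ^ p := by
  obtain ⟨K, hK⟩ := (isCompact_closedBall (0 : E) 1).exists_bound_of_continuousOn hg.continuousOn
  refine ⟨max K M, fun x => ?_⟩
  rcases le_total ‖x‖ 1 with hx | hx
  · rw [max_eq_left hx, Real.one_rpow, mul_one]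
    exact (hK x (mem_closedBall_zero_iff.mpr hx)).trans (le_max_left _ _)
  · rw [max_eq_right hx]
    exact (hM x hx).trans (by gcongr; exact le_max_right _ _)

theorem max_one_norm_mem_Icc_of_norm_sub_le {x w : E} (h : ‖w - x‖ ≤ max 1 ‖x‖ / 2) :
    max 1 ‖w‖ ∈ Set.Icc (max 1 ‖x‖ / 2) (2 * max 1 ‖x‖) := by
  obtain ⟨h1, h2⟩ := abs_le.mp ((abs_norm_sub_norm_le w x).trans h)
  constructor
  · rcases le_total ‖x‖ 1 with hx | hx
    · rw [max_eq_left hx]; linarith [le_max_left 1 ‖w‖]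
    · rw [max_eq_right hx] at h1 ⊢; linarith [le_max_right 1 ‖w‖]
  · exact max_le (by linarith [le_max_left 1 ‖x‖]) (by linarith [le_max_right 1 ‖x‖])

variable [NormedSpace ℝ E] [NormedSpace ℝ F]

noncomputable def taylorRemainder (f : E → F) (x y : E) : F := f (x + y) - f x - fderiv ℝ f x y

theorem norm_taylorRemainder_le {f : E → F} (hf : ContDiff ℝ 2 f) {x y : E} {K : ℝ}
    (hK : ∀ w ∈ closedBall x ‖y‖, ‖fderiv ℝ (fderiv ℝ f) w‖ ≤ K) :
    ‖taylorRemainder f x y‖ ≤ K * ‖y‖ ^ 2 := by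
  have hf' : Differentiable ℝ (fderiv ℝ f) :=
    (hf.fderiv_right (m := 1) (by norm_num)).differentiable one_ne_zero
  have hx : x ∈ closedBall x ‖y‖ := mem_closedBall_self (norm_nonneg y)
  have hxy : x + y ∈ closedBall x ‖y‖ := by simp
  have hK0 : 0 ≤ K := (norm_nonneg (fderiv ℝ (fderiv ℝ f) x)).trans (hK x hx)
  have hlip : ∀ w ∈ closedBall x ‖y‖, ‖fderiv ℝ f w - fderiv ℝ f x‖ ≤ K * ‖y‖ := fun w hw =>
    ((convex_closedBall x ‖y‖).norm_image_sub_le_of_norm_fderiv_le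
      (fun z _ => hf'.differentiableAt) hK hx hw).trans
      (mul_le_mul_of_nonneg_left (mem_closedBall_iff_norm.mp hw) hK0)
  have := (convex_closedBall x ‖y‖).norm_image_sub_le_of_norm_fderiv_le'
    (fun z _ => (hf.differentiable two_ne_zero).differentiableAt) hlip hx hxy
  simpa [taylorRemainder, sq, mul_assoc] using this

theorem norm_le_of_norm_fderiv_le {f : E → F} (hf : Differentiable ℝ f) {p C : ℝ} (hp : 0 ≤ p)
    (hC : ∀ w, ‖fderiv ℝ f w‖ ≤ C * max 1 ‖w‖ ^ p) (x : E) :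
    ‖f x‖ ≤ (‖f 0‖ + C) * max 1 ‖x‖ ^ (p + 1) := by
  have hC0 := nonneg_of_norm_le_mul_max_one_rpow hC
  have hm : 1 ≤ max 1 ‖x‖ := le_max_left _ _
  have hball : ∀ z ∈ closedBall (0 : E) ‖x‖, ‖fderiv ℝ f z‖ ≤ C * max 1 ‖x‖ ^ p := by
    intro z hz
    refine (hC z).trans (by gcongr; exact mem_closedBall_zero_iff.mp hz)
  have hmvt := (convex_closedBall (0 : E) ‖x‖).norm_image_sub_le_of_norm_fderiv_le
    (fun z _ => hf z) hball (mem_closedBall_self (norm_nonneg x))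
    (mem_closedBall_zero_iff.mpr le_rfl)
  rw [sub_zero] at hmvt
  have h1 : 1 ≤ max 1 ‖x‖ ^ (p + 1) := Real.one_le_rpow hm (by linarith)
  calc ‖f x‖ ≤ ‖f 0‖ + ‖f x - f 0‖ := norm_le_norm_add_norm_sub' _ _
    _ ≤ ‖f 0‖ * max 1 ‖x‖ ^ (p + 1) + C * max 1 ‖x‖ ^ p * max 1 ‖x‖ := by
        gcongr
        · exact le_mul_of_one_le_right (norm_nonneg _) h1
        · exact hmvt.trans (by gcongr; exact le_max_right _ _)
    _ = (‖f 0‖ + C) * max 1 ‖x‖ ^ (p + 1) := by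
        rw [Real.rpow_add_one (by positivity)]; ring

theorem norm_taylorRemainder_le_of_norm_le_half {f : E → F} (hf : ContDiff ℝ 2 f) {q C : ℝ}
    (hC : ∀ w, ‖fderiv ℝ (fderiv ℝ f) w‖ ≤ C * max 1 ‖w‖ ^ q) {x y : E}
    (hy : ‖y‖ ≤ max 1 ‖x‖ / 2) :
    ‖taylorRemainder f x y‖ ≤ C * 2 ^ |q| * max 1 ‖x‖ ^ q * ‖y‖ ^ 2 := by
  have hC0 := nonneg_of_norm_le_mul_max_one_rpow (g := fderiv ℝ (fderiv ℝ f)) hC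
  refine norm_taylorRemainder_le hf fun w hw => ?_
  obtain ⟨hlow, hhigh⟩ :=
    max_one_norm_mem_Icc_of_norm_sub_le ((mem_closedBall_iff_norm.mp hw).trans hy)
  calc ‖fderiv ℝ (fderiv ℝ f) w‖ ≤ C * max 1 ‖w‖ ^ q := hC w
    _ ≤ C * (2 ^ |q| * max 1 ‖x‖ ^ q) := by
        gcongr
        exact rpow_le_two_rpow_abs_mul_rpow (by positivity) hlow hhigh
    _ = C * 2 ^ |q| * max 1 ‖x‖ ^ q := by ring

theorem norm_taylorRemainder_le_of_half_lt_norm {f : E → F} {θ A B : ℝ} (hθ : 1 ≤ θ)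
    (hA : ∀ w, ‖f w‖ ≤ A * max 1 ‖w‖ ^ θ)
    (hB : ∀ w, ‖fderiv ℝ f w‖ ≤ B * max 1 ‖w‖ ^ (θ - 1)) {x y : E}
    (hy : max 1 ‖x‖ / 2 < ‖y‖) :
    ‖taylorRemainder f x y‖ ≤ (A * (3 ^ θ + 2 ^ θ) + B * 2 ^ (θ - 1)) * ‖y‖ ^ θ := by
  have hA0 := nonneg_of_norm_le_mul_max_one_rpow hA
  have hB0 := nonneg_of_norm_le_mul_max_one_rpow hB
  have hy0 : 0 < ‖y‖ := lt_of_le_of_lt (by positivity) hy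
  have hx : max 1 ‖x‖ ≤ 2 * ‖y‖ := by linarith
  have hxy : max 1 ‖x + y‖ ≤ 3 * ‖y‖ :=
    max_le (by linarith [le_max_left 1 ‖x‖])
      (by linarith [norm_add_le x y, le_max_right 1 ‖x‖])
  have hfxy : ‖f (x + y)‖ ≤ A * (3 ^ θ * ‖y‖ ^ θ) := (hA _).trans (by
    gcongr
    exact (Real.rpow_le_rpow (by positivity) hxy (by linarith)).trans_eq
      (Real.mul_rpow (by norm_num) hy0.le))
  have hfx : ‖f x‖ ≤ A * (2 ^ θ * ‖y‖ ^ θ) := (hA _).trans (by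
    gcongr
    exact (Real.rpow_le_rpow (by positivity) hx (by linarith)).trans_eq
      (Real.mul_rpow (by norm_num) hy0.le))
  have hdfx : ‖fderiv ℝ f x y‖ ≤ B * (2 ^ (θ - 1) * ‖y‖ ^ (θ - 1)) * ‖y‖ :=
    ((fderiv ℝ f x).le_opNorm y).trans (by
      gcongr
      refine (hB x).trans ?_
      gcongr
      exact (Real.rpow_le_rpow (by positivity) hx (by linarith)).trans_eq
        (Real.mul_rpow (by norm_num) hy0.le))
  calc ‖taylorRemainder f x y‖ ≤ ‖f (x + y)‖ + ‖f x‖ + ‖fderiv ℝ f x y‖ :=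
        (norm_sub_le _ _).trans (by gcongr; exact norm_sub_le _ _)
    _ ≤ A * (3 ^ θ * ‖y‖ ^ θ) + A * (2 ^ θ * ‖y‖ ^ θ)
          + B * (2 ^ (θ - 1) * ‖y‖ ^ (θ - 1)) * ‖y‖ := by gcongr
    _ = (A * (3 ^ θ + 2 ^ θ) + B * 2 ^ (θ - 1)) * ‖y‖ ^ θ := by
        rw [Real.rpow_sub_one hy0.ne']; field_simp

structure RemainderEstimate (f : E → F) (θ c : ℝ) : Prop where
  nonneg : 0 ≤ c
  near {x y : E} : ‖y‖ ≤ max 1 ‖x‖ / 2 →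
    ‖taylorRemainder f x y‖ ≤ c * max 1 ‖x‖ ^ (θ - 2) * ‖y‖ ^ 2
  far {x y : E} : max 1 ‖x‖ / 2 < ‖y‖ → ‖taylorRemainder f x y‖ ≤ c * ‖y‖ ^ θ

theorem exists_remainderEstimate [ProperSpace E] {f : E → F} (hf : ContDiff ℝ 2 f) {θ M : ℝ}
    (hθ : 1 ≤ θ)
    (hM : ∀ x : E, 1 ≤ ‖x‖ → ‖x‖ ^ (1 - θ) * ‖fderiv ℝ f x‖ ≤ M ∧
      ‖x‖ ^ (1 - θ) * (‖x‖ * ‖fderiv ℝ (fderiv ℝ f) x‖) ≤ M) :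
    ∃ c, RemainderEstimate f θ c := by
  have hf' : ContDiff ℝ 1 (fderiv ℝ f) := hf.fderiv_right (by norm_num)
  obtain ⟨B, hB⟩ := exists_norm_le_mul_max_one_rpow hf'.continuous (p := θ - 1) (M := M)
    fun x hx => le_mul_rpow_of_rpow_neg_mul_le (by positivity) <| by
      rw [neg_sub]; exact (hM x hx).1
  obtain ⟨D, hD⟩ := exists_norm_le_mul_max_one_rpow (hf'.continuous_fderiv one_ne_zero)
    (p := θ - 2) (M := M) fun x hx => le_mul_rpow_of_rpow_neg_mul_le (by positivity) <| by
      have hx0 : ‖x‖ ≠ 0 := by positivity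
      rw [neg_sub, show 2 - θ = 1 - θ + 1 by ring, Real.rpow_add_one hx0, mul_assoc]
      exact (hM x hx).2
  have hA := norm_le_of_norm_fderiv_le (hf.differentiable two_ne_zero) (by linarith) hB
  simp only [sub_add_cancel] at hA
  have hD0 := nonneg_of_norm_le_mul_max_one_rpow hD
  refine ⟨max (D * 2 ^ |θ - 2|) ((‖f 0‖ + B) * (3 ^ θ + 2 ^ θ) + B * 2 ^ (θ - 1)),
    le_max_of_le_left (by positivity), fun hy => ?_, fun hy => ?_⟩
  · refine (norm_taylorRemainder_le_of_norm_le_half hf hD hy).trans ?_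
    gcongr
    exact le_max_left _ _
  · refine (norm_taylorRemainder_le_of_half_lt_norm hθ hA hB hy).trans ?_
    gcongr
    exact le_max_right _ _

end Remainder

section MomentWeight

variable {E : Type*} [NormedAddCommGroup E] {θ : ℝ}

noncomputable def momentWeight (θ : ℝ) (y : E) : ℝ := if ‖y‖ < 1 then ‖y‖ ^ 2 else ‖y‖ ^ θ

theorem momentWeight_nonneg (θ : ℝ) (y : E) : 0 ≤ momentWeight θ y := by
  unfold momentWeight
  split_ifs <;> positivity

theorem sq_le_momentWeight (hθ : 2 ≤ θ) (y : E) : ‖y‖ ^ 2 ≤ momentWeight θ y := by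
  unfold momentWeight
  split_ifs with hy
  · rfl
  · exact_mod_cast Real.rpow_le_rpow_of_exponent_le (not_lt.mp hy) hθ

theorem rpow_le_momentWeight (hθ : 2 ≤ θ) (y : E) : ‖y‖ ^ θ ≤ momentWeight θ y := by
  unfold momentWeight
  split_ifs with hy
  · exact_mod_cast Real.rpow_le_rpow_of_exponent_ge' (norm_nonneg y) hy.le (by norm_num) hθ
  · rfl

theorem sq_le_rpow_mul_momentWeight (hθ : θ ≤ 2) {r : ℝ} (hr : 1 ≤ r) {y : E} (hy : ‖y‖ ≤ r) :
    ‖y‖ ^ 2 ≤ r ^ (2 - θ) * momentWeight θ y := by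
  unfold momentWeight
  split_ifs with hy1
  · exact le_mul_of_one_le_left (by positivity) (Real.one_le_rpow hr (by linarith))
  · have hy0 : 0 < ‖y‖ := by linarith [not_lt.mp hy1]
    calc ‖y‖ ^ 2 = ‖y‖ ^ (2 - θ) * ‖y‖ ^ θ := by
          rw [← Real.rpow_add hy0, sub_add_cancel, Real.rpow_two]
      _ ≤ r ^ (2 - θ) * ‖y‖ ^ θ := by gcongr

end MomentWeight

namespace RemainderEstimate

variable {E F : Type*} [NormedAddCommGroup E] [NormedSpace ℝ E]
  [NormedAddCommGroup F] [NormedSpace ℝ F] {f : E → F} {θ c : ℝ}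

theorem norm_le_mul_momentWeight (h : RemainderEstimate f θ c) (hθ : 2 ≤ θ) (x y : E) :
    ‖taylorRemainder f x y‖ ≤ c * max 1 ‖x‖ ^ (θ - 2) * momentWeight θ y := by
  have hc := h.nonneg
  have hx : 1 ≤ max 1 ‖x‖ ^ (θ - 2) := Real.one_le_rpow (le_max_left _ _) (by linarith)
  rcases le_or_gt ‖y‖ (max 1 ‖x‖ / 2) with hy | hy
  · exact (h.near hy).trans (by gcongr; exact sq_le_momentWeight hθ y)
  · calc ‖taylorRemainder f x y‖ ≤ c * ‖y‖ ^ θ := h.far hy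
      _ ≤ c * (max 1 ‖x‖ ^ (θ - 2) * momentWeight θ y) := by
          gcongr
          exact (rpow_le_momentWeight hθ y).trans
            (le_mul_of_one_le_left (momentWeight_nonneg θ y) hx)
      _ = c * max 1 ‖x‖ ^ (θ - 2) * momentWeight θ y := by ring

theorem norm_le_rpow (h : RemainderEstimate f θ c) (hθ : θ ≤ 2) (x y : E) :
    ‖taylorRemainder f x y‖ ≤ c * ‖y‖ ^ θ := by
  have hc := h.nonneg
  rcases le_or_gt ‖y‖ (max 1 ‖x‖ / 2) with hy | hy
  · calc ‖taylorRemainder f x y‖ ≤ c * max 1 ‖x‖ ^ (θ - 2) * ‖y‖ ^ 2 := h.near hy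
      _ ≤ c * ‖y‖ ^ θ := by
          rw [mul_assoc]
          gcongr
          exact rpow_sub_two_mul_sq_le (norm_nonneg y)
            (by linarith [le_max_left 1 ‖x‖]) hθ
  · exact h.far hy

theorem norm_le_of_norm_le (h : RemainderEstimate f θ c) (hθ : θ ≤ 2) {r : ℝ} (hr : 1 ≤ r)
    {x y : E} (hx : 2 * r ≤ max 1 ‖x‖) (hy : ‖y‖ ≤ r) :
    ‖taylorRemainder f x y‖ ≤ c * r ^ (2 - θ) * max 1 ‖x‖ ^ (θ - 2) * momentWeight θ y := by
  have hc := h.nonneg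
  calc ‖taylorRemainder f x y‖ ≤ c * max 1 ‖x‖ ^ (θ - 2) * ‖y‖ ^ 2 := h.near (by linarith)
    _ ≤ c * max 1 ‖x‖ ^ (θ - 2) * (r ^ (2 - θ) * momentWeight θ y) := by
        gcongr
        exact sq_le_rpow_mul_momentWeight hθ hr hy
    _ = c * r ^ (2 - θ) * max 1 ‖x‖ ^ (θ - 2) * momentWeight θ y := by ring

end RemainderEstimate

section Integral

variable {α G : Type*} [MeasurableSpace α] [NormedAddCommGroup G] [NormedSpace ℝ G]
  {μ : Measure α} {g : α → G} {u v : α → ℝ} {a b : ℝ} {U V : ℝ≥0∞}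

theorem norm_integral_le_of_norm_le_split {s : Set α} (hs : MeasurableSet s) (ha : 0 ≤ a)
    (hb : 0 ≤ b) (hU : ∫⁻ y, ENNReal.ofReal (u y) ∂μ ≤ U)
    (hV : ∫⁻ y in s, ENNReal.ofReal (v y) ∂μ ≤ V) (hUtop : U ≠ ⊤) (hVtop : V ≠ ⊤)
    (hgu : ∀ y ∉ s, ‖g y‖ ≤ a * u y) (hgv : ∀ y ∈ s, ‖g y‖ ≤ b * v y) :
    ‖∫ y, g y ∂μ‖ ≤ a * U.toReal + b * V.toReal := by
  have hsc : ∫⁻ y in sᶜ, ENNReal.ofReal ‖g y‖ ∂μ ≤ ENNReal.ofReal a * U :=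
    calc ∫⁻ y in sᶜ, ENNReal.ofReal ‖g y‖ ∂μ
        ≤ ∫⁻ y in sᶜ, ENNReal.ofReal a * ENNReal.ofReal (u y) ∂μ :=
          setLIntegral_mono' hs.compl fun y hy => by
            rw [← ENNReal.ofReal_mul ha]; exact ENNReal.ofReal_le_ofReal (hgu y hy)
      _ = ENNReal.ofReal a * ∫⁻ y in sᶜ, ENNReal.ofReal (u y) ∂μ :=
          lintegral_const_mul' _ _ ENNReal.ofReal_ne_top
      _ ≤ ENNReal.ofReal a * U := by gcongr; exact (setLIntegral_le_lintegral _ _).trans hU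
  have hs' : ∫⁻ y in s, ENNReal.ofReal ‖g y‖ ∂μ ≤ ENNReal.ofReal b * V :=
    calc ∫⁻ y in s, ENNReal.ofReal ‖g y‖ ∂μ
        ≤ ∫⁻ y in s, ENNReal.ofReal b * ENNReal.ofReal (v y) ∂μ :=
          setLIntegral_mono' hs fun y hy => by
            rw [← ENNReal.ofReal_mul hb]; exact ENNReal.ofReal_le_ofReal (hgv y hy)
      _ = ENNReal.ofReal b * ∫⁻ y in s, ENNReal.ofReal (v y) ∂μ :=
          lintegral_const_mul' _ _ ENNReal.ofReal_ne_top
      _ ≤ ENNReal.ofReal b * V := by gcongr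
  have htotal : ∫⁻ y, ENNReal.ofReal ‖g y‖ ∂μ ≤ ENNReal.ofReal a * U + ENNReal.ofReal b * V := by
    rw [← lintegral_add_compl _ hs, add_comm]
    exact add_le_add hsc hs'
  calc ‖∫ y, g y ∂μ‖ ≤ (∫⁻ y, ENNReal.ofReal ‖g y‖ ∂μ).toReal :=
        norm_integral_le_lintegral_norm g
    _ ≤ (ENNReal.ofReal a * U + ENNReal.ofReal b * V).toReal :=
        ENNReal.toReal_mono (by finiteness) htotal
    _ = a * U.toReal + b * V.toReal := by
        rw [ENNReal.toReal_add (by finiteness) (by finiteness), ENNReal.toReal_mul,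
          ENNReal.toReal_mul, ENNReal.toReal_ofReal ha, ENNReal.toReal_ofReal hb]

theorem norm_integral_le_of_norm_le (ha : 0 ≤ a) (hU : ∫⁻ y, ENNReal.ofReal (u y) ∂μ ≤ U)
    (hUtop : U ≠ ⊤) (hg : ∀ y, ‖g y‖ ≤ a * u y) : ‖∫ y, g y ∂μ‖ ≤ a * U.toReal := by
  simpa using norm_integral_le_of_norm_le_split (v := 0) (b := 0) (V := 0) MeasurableSet.empty
    ha le_rfl hU (by simp) hUtop ENNReal.zero_ne_top (fun y _ => hg y) (by simp)

end Integral

theorem tendsto_zero_of_norm_le_add {ι α G : Type*} [SeminormedAddGroup G] {l' : Filter ι}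
    [l'.NeBot] {l : Filter α} {g : α → G} {a : ι → α → ℝ} {b : ι → ℝ}
    (ha : ∀ i, Tendsto (a i) l (𝓝 0)) (hb : Tendsto b l' (𝓝 0))
    (h : ∀ᶠ i in l', ∀ᶠ x in l, ‖g x‖ ≤ a i x + b i) : Tendsto g l (𝓝 0) := by
  rw [Metric.tendsto_nhds]
  intro ε hε
  obtain ⟨i, hi, hbi⟩ := (h.and (hb.eventually (eventually_lt_nhds (half_pos hε)))).exists
  filter_upwards [hi, (ha i).eventually (eventually_lt_nhds (half_pos hε))] with x hx hax
  rw [dist_zero_right]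
  linarith

noncomputable def tailMoment {E : Type*} [NormedAddCommGroup E] [MeasurableSpace E]
    (ν : E → Measure E) (θ r : ℝ) : ℝ≥0∞ :=
  ⨆ x, ∫⁻ y in {y | r < ‖y‖}, ENNReal.ofReal (‖y‖ ^ θ) ∂(ν x)

section Levy

variable {n : ℕ} {ν : EuclideanSpace ℝ (Fin n) → Measure (EuclideanSpace ℝ (Fin n))}
  {f : EuclideanSpace ℝ (Fin n) → ℝ} {θ c : ℝ} {M : ℝ≥0∞}

theorem abs_levyJ_le_of_two_le (hR : RemainderEstimate f θ c) (hθ : 2 ≤ θ)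
    (hM : ∀ x, ∫⁻ y, ENNReal.ofReal (momentWeight θ y) ∂(ν x) ≤ M) (hMtop : M ≠ ⊤)
    (x : EuclideanSpace ℝ (Fin n)) :
    |levyJ ν f x| ≤ c * max 1 ‖x‖ ^ (θ - 2) * M.toReal :=
  norm_integral_le_of_norm_le (by have := hR.nonneg; positivity) (hM x) hMtop
    (hR.norm_le_mul_momentWeight hθ x)

theorem abs_levyJ_le_of_le_two (hR : RemainderEstimate f θ c) (hθ : θ ≤ 2)
    (hM : ∀ x, ∫⁻ y, ENNReal.ofReal (momentWeight θ y) ∂(ν x) ≤ M) (hMtop : M ≠ ⊤)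
    {r : ℝ} (hr : 1 ≤ r) (hS : tailMoment ν θ r ≠ ⊤) {x : EuclideanSpace ℝ (Fin n)}
    (hx : 2 * r ≤ max 1 ‖x‖) :
    |levyJ ν f x| ≤ c * r ^ (2 - θ) * max 1 ‖x‖ ^ (θ - 2) * M.toReal
      + c * (tailMoment ν θ r).toReal :=
  norm_integral_le_of_norm_le_split (measurableSet_lt measurable_const measurable_norm)
    (by have := hR.nonneg; positivity) hR.nonneg (hM x)
    (le_iSup (fun x => ∫⁻ y in {y | r < ‖y‖}, ENNReal.ofReal (‖y‖ ^ θ) ∂(ν x)) x) hMtop hS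
    (fun y hy => hR.norm_le_of_norm_le hθ hr hx (not_lt.mp hy))
    (fun y _ => hR.norm_le_rpow hθ x y)

theorem tendsto_levyJ_cobounded (hR : RemainderEstimate f θ c) (hθ : θ < 2)
    (hM : ∀ x, ∫⁻ y, ENNReal.ofReal (momentWeight θ y) ∂(ν x) ≤ M) (hMtop : M ≠ ⊤)
    (htail : TailCondition ν θ) :
    Tendsto (levyJ ν f) (cobounded _) (𝓝 0) := by
  have htail : Tendsto (tailMoment ν θ) atTop (𝓝 0) := htail
  have hmax : Tendsto (fun x : EuclideanSpace ℝ (Fin n) => max 1 ‖x‖) (cobounded _) atTop :=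
    tendsto_atTop_mono (fun x => le_max_right _ _) tendsto_norm_cobounded_atTop
  refine tendsto_zero_of_norm_le_add (l' := atTop)
    (a := fun r x => c * r ^ (2 - θ) * M.toReal * max 1 ‖x‖ ^ (θ - 2))
    (b := fun r => c * (tailMoment ν θ r).toReal) (fun r => ?_) ?_ ?_
  · have := ((tendsto_rpow_neg_atTop (by linarith : 0 < 2 - θ)).comp hmax).const_mul
      (c * r ^ (2 - θ) * M.toReal)
    simpa [Function.comp_def] using this
  · simpa only [ENNReal.toReal_zero, mul_zero, Function.comp_apply] using
      ((ENNReal.tendsto_toReal ENNReal.zero_ne_top).comp htail).const_mul c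
  · filter_upwards [eventually_ge_atTop 1, htail.eventually (eventually_lt_nhds zero_lt_one)]
      with r hr hS
    filter_upwards [hmax.eventually_ge_atTop (2 * r)] with x hx
    exact (abs_levyJ_le_of_le_two hR hθ.le hM hMtop hr (ne_top_of_lt hS) hx).trans_eq (by ring)

theorem exists_abs_weighted_levyJ_le (hR : RemainderEstimate f θ c) (hθ : 2 ≤ θ)
    (hM : ∀ x, ∫⁻ y, ENNReal.ofReal (momentWeight θ y) ∂(ν x) ≤ M) (hMtop : M ≠ ⊤) :
    ∃ B : ℝ, ∀ x, |(1 + ‖x‖) ^ (2 - θ) * levyJ ν f x| ≤ B := by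
  refine ⟨c * M.toReal, fun x => ?_⟩
  have hm : 0 < max 1 ‖x‖ := lt_max_of_lt_left one_pos
  calc |(1 + ‖x‖) ^ (2 - θ) * levyJ ν f x| = (1 + ‖x‖) ^ (2 - θ) * |levyJ ν f x| := by
        rw [abs_mul, abs_of_nonneg (by positivity)]
    _ ≤ max 1 ‖x‖ ^ (2 - θ) * (c * max 1 ‖x‖ ^ (θ - 2) * M.toReal) :=
        mul_le_mul (Real.rpow_le_rpow_of_nonpos hm
            (max_le (by linarith [norm_nonneg x]) (by linarith)) (by linarith))
          (abs_levyJ_le_of_two_le hR hθ hM hMtop x) (abs_nonneg _) (by positivity)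
    _ = max 1 ‖x‖ ^ (2 - θ + (θ - 2)) * (c * M.toReal) := by
        rw [Real.rpow_add hm]; ring
    _ = c * M.toReal := by simp

end Levy

theorem levyJ_vanishes_or_bounded_general {n : ℕ}
    (ν : EuclideanSpace ℝ (Fin n) → Measure (EuclideanSpace ℝ (Fin n)))
    (θ : ℝ) (hθ : 1 ≤ θ)
    (hmom : MomentCondition ν θ) (htail : TailCondition ν θ)
    (f : EuclideanSpace ℝ (Fin n) → ℝ) (hf : ContDiff ℝ 2 f)
    (hgrowth : ∃ M : ℝ, ∀ x : EuclideanSpace ℝ (Fin n), 1 ≤ ‖x‖ →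
      ‖x‖ ^ (1 - θ) * ‖fderiv ℝ f x‖ ≤ M ∧
        ‖x‖ ^ (1 - θ) * (‖x‖ * ‖fderiv ℝ (fderiv ℝ f) x‖) ≤ M) :
    (θ < 2 → Tendsto (levyJ ν f) (Bornology.cobounded _) (nhds 0)) ∧
    (2 ≤ θ → ∃ M : ℝ, ∀ x : EuclideanSpace ℝ (Fin n),
      |(1 + ‖x‖) ^ (2 - θ) * levyJ ν f x| ≤ M) := by
  obtain ⟨M, hMtop, hM⟩ := hmom
  obtain ⟨Mf, hMf⟩ := hgrowth
  obtain ⟨c, hR⟩ := exists_remainderEstimate hf hθ hMf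
  exact ⟨fun hθ2 => tendsto_levyJ_cobounded hR hθ2 hM hMtop htail,
    fun hθ2 => exists_abs_weighted_levyJ_le hR hθ2 hM hMtop⟩

theorem levyJ_vanishes_or_bounded {n : ℕ}
    (ν : EuclideanSpace ℝ (Fin n) → Measure (EuclideanSpace ℝ (Fin n)))
    (hν : IsLevyKernel ν)
    (θ : ℝ) (hθ : 1 ≤ θ)
    (hmom : MomentCondition ν θ) (htail : TailCondition ν θ)
    (f : EuclideanSpace ℝ (Fin n) → ℝ) (hf : ContDiff ℝ 2 f)
    (hgrowth : ∃ M : ℝ, ∀ x : EuclideanSpace ℝ (Fin n), 1 ≤ ‖x‖ →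
      ‖x‖ ^ (1 - θ) * ‖fderiv ℝ f x‖ ≤ M ∧
        ‖x‖ ^ (1 - θ) * (‖x‖ * ‖fderiv ℝ (fderiv ℝ f) x‖) ≤ M) :
    (θ < 2 → Tendsto (levyJ ν f) (Bornology.cobounded _) (nhds 0)) ∧
    (2 ≤ θ → ∃ M : ℝ, ∀ x : EuclideanSpace ℝ (Fin n),
      |(1 + ‖x‖) ^ (2 - θ) * levyJ ν f x| ≤ M) :=
  levyJ_vanishes_or_bounded_general ν θ hθ hmom htail f hf hgrowth
end

section
/- Let n ≥ 1, ℓ ∈ ℝⁿ, e = (1,…,1)' ∈ ℝⁿ, v ∈ ℝⁿ with nonnegative components and ⟨e,v⟩ = 1, M ∈ ℝ^{n×n}, Γ = diag(γ_1,…,γ_n) with γ_i ≥ 0, and define b̄(x) = ℓ − M(x − ⟨e,x⟩⁺ v) − ⟨e,x⟩⁺ Γ v, where ⟨e,x⟩⁺ = max(⟨e,x⟩,0). Suppose Q is a symmetric positive definite n×n matrix such that the symmetric matrices M'Q + QM and (M − (M−Γ)ve')'Q + Q(M − (M−Γ)ve') are positive definite, and let κ > 0 be the minimum of their smallest eigenvalues.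 Then ⟨b̄(y) − b̄(x), Q(y−x)⟩ ≤ −(κ/2)·|y−x|² for all x, y ∈ ℝⁿ. -/
open Matrix

private lemma vecMulVec_mulVec' {n : ℕ} (v e z : Fin n → ℝ) :
    (vecMulVec v e).mulVec z = (e ⬝ᵥ z) • v := by
  ext i
  simp only [vecMulVec, mulVec, dotProduct, Pi.smul_apply, smul_eq_mul, of_apply,
    Finset.sum_mul, Finset.mul_sum]
  exact Finset.sum_congr rfl fun j _ => by ring

private lemma quad_form_eq {n : ℕ} (Q A : Matrix (Fin n) (Fin n) ℝ) (hQ : Qᵀ = Q)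
    (z : Fin n → ℝ) :
    z ⬝ᵥ (Aᵀ * Q + Q * A).mulVec z = 2 * (A.mulVec z ⬝ᵥ Q.mulVec z) := by
  rw [add_mulVec, dotProduct_add, ← mulVec_mulVec, ← mulVec_mulVec,
    dotProduct_mulVec z Aᵀ, vecMul_transpose,
    dotProduct_mulVec z Q, ← hQ, vecMul_transpose, hQ, dotProduct_comm (Q.mulVec z)]
  ring

theorem piecewise_OU_drift_dissipative {n : ℕ} (hn : 1 ≤ n)
    (ℓ : Fin n → ℝ) (v : Fin n → ℝ) (hv : ∀ i, 0 ≤ v i)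
    (e : Fin n → ℝ) (he : e = fun _ => 1) (hv1 : e ⬝ᵥ v = 1)
    (M : Matrix (Fin n) (Fin n) ℝ)
    (γ : Fin n → ℝ) (hγ : ∀ i, 0 ≤ γ i)
    (bbar : (Fin n → ℝ) → (Fin n → ℝ))
    (hbbar : ∀ x, bbar x =
      ℓ - M.mulVec (x - max (e ⬝ᵥ x) 0 • v) - max (e ⬝ᵥ x) 0 • (diagonal γ).mulVec v)
    (Q : Matrix (Fin n) (Fin n) ℝ) (hQ : Q.PosDef)
    (hPD1 : (Mᵀ * Q + Q * M).PosDef)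
    (hPD2 : ((M - (M - diagonal γ) * vecMulVec v e)ᵀ * Q +
        Q * (M - (M - diagonal γ) * vecMulVec v e)).PosDef)
    (κ : ℝ) (hκpos : 0 < κ)
    (hκ : IsGreatest {a : ℝ |
        (∀ z : Fin n → ℝ, a * (z ⬝ᵥ z) ≤ z ⬝ᵥ (Mᵀ * Q + Q * M).mulVec z) ∧
        (∀ z : Fin n → ℝ, a * (z ⬝ᵥ z) ≤
          z ⬝ᵥ ((M - (M - diagonal γ) * vecMulVec v e)ᵀ * Q +
            Q * (M - (M - diagonal γ) * vecMulVec v e)).mulVec z)} κ) :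
    ∀ x y : Fin n → ℝ,
      (bbar y - bbar x) ⬝ᵥ Q.mulVec (y - x) ≤ -(κ / 2) * ((y - x) ⬝ᵥ (y - x)) := by
  intro x y
  have hQsym : Qᵀ = Q := hQ.isHermitian.eq
  set z : Fin n → ℝ := y - x with hz
  set δ : ℝ := max (e ⬝ᵥ y) 0 - max (e ⬝ᵥ x) 0 with hδdef
  set s : ℝ := e ⬝ᵥ z with hsdef
  have hs : s = e ⬝ᵥ y - e ⬝ᵥ x := by rw [hsdef, hz, dotProduct_sub]
  -- difference of drifts
  have hdiff : bbar y - bbar x =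
      δ • ((M - diagonal γ).mulVec v) - M.mulVec z := by
    rw [hbbar y, hbbar x, hz, mulVec_sub M y, mulVec_sub M x,
      mulVec_smul, mulVec_smul, mulVec_sub M y x, sub_mulVec]
    module
  -- quadratic bounds
  have h1 := hκ.1.1 z
  have h2 := hκ.1.2 z
  rw [quad_form_eq Q M hQsym z] at h1
  rw [quad_form_eq Q _ hQsym z] at h2
  have hBz : (M - (M - diagonal γ) * vecMulVec v e).mulVec z =
      M.mulVec z - s • ((M - diagonal γ).mulVec v) := by
    rw [sub_mulVec, ← mulVec_mulVec, vecMulVec_mulVec', mulVec_smul, hsdef]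
  have hexp : (M.mulVec z - s • ((M - diagonal γ).mulVec v)) ⬝ᵥ Q.mulVec z =
      M.mulVec z ⬝ᵥ Q.mulVec z - s * ((M - diagonal γ).mulVec v ⬝ᵥ Q.mulVec z) := by
    rw [sub_dotProduct, smul_dotProduct, smul_eq_mul]
  rw [hBz, hexp] at h2
  have hq : κ * (z ⬝ᵥ z) ≤ κ * (z ⬝ᵥ z) := le_refl _
  have hgoal_eq : (bbar y - bbar x) ⬝ᵥ Q.mulVec z =
      δ * ((M - diagonal γ).mulVec v ⬝ᵥ Q.mulVec z) - M.mulVec z ⬝ᵥ Q.mulVec z := by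
    rw [hdiff, sub_dotProduct, smul_dotProduct, smul_eq_mul]
  rw [hz] at hgoal_eq ⊢
  rw [hgoal_eq]
  set a : ℝ := M.mulVec z ⬝ᵥ Q.mulVec z with ha
  set c : ℝ := (M - diagonal γ).mulVec v ⬝ᵥ Q.mulVec z with hc
  set q : ℝ := z ⬝ᵥ z with hqdef
  have h1' : κ * q ≤ 2 * a := h1
  have h2' : κ * q ≤ 2 * (a - s * c) := h2
  -- bounds on δ
  have hma := max_choice (e ⬝ᵥ x) 0
  have hmb := max_choice (e ⬝ᵥ y) 0
  have hla := le_max_left (e ⬝ᵥ x) 0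
  have hra := le_max_right (e ⬝ᵥ x) 0
  have hlb := le_max_left (e ⬝ᵥ y) 0
  have hrb := le_max_right (e ⬝ᵥ y) 0
  have hδ1 : 0 ≤ s → 0 ≤ δ ∧ δ ≤ s := by
    intro h
    rcases hma with h1'' | h1'' <;> rcases hmb with h2'' | h2'' <;>
      constructor <;> rw [hδdef] <;> rw [hs] at h <;> linarith
  have hδ2 : s ≤ 0 → s ≤ δ ∧ δ ≤ 0 := by
    intro h
    rcases hma with h1'' | h1'' <;> rcases hmb with h2'' | h2'' <;>
      constructor <;> rw [hδdef] <;> rw [hs] at h <;> linarith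
  rcases le_total 0 s with hss | hss
  · obtain ⟨hd0, hds⟩ := hδ1 hss
    rcases le_total 0 c with hcc | hcc
    · nlinarith [mul_le_mul_of_nonneg_right hds hcc]
    · nlinarith [mul_nonpos_of_nonneg_of_nonpos hd0 hcc]
  · obtain ⟨hsd, hd0⟩ := hδ2 hss
    rcases le_total 0 c with hcc | hcc
    · nlinarith [mul_nonpos_of_nonpos_of_nonneg hd0 hcc]
    · nlinarith [mul_le_mul_of_nonpos_right hsd hcc]
end

section
/- For the backward recurrence time chain, the probability measure π on ℕ defined by π({0}) = π({1}) = 1/(2+c) and π({i}) = (∏_{j=0}^{i−1} p_j)/(2+c) for i ≥ 2 is the unique invariant probability measure of the kernel P. -/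
open MeasureTheory ProbabilityTheory Filter ENNReal

noncomputable def kIter {X : Type*} [MeasurableSpace X] (P : Kernel X X) : ℕ → Kernel X X
  | 0 => Kernel.id
  | n + 1 => (kIter P n) ∘ₖ P

def Invariant {X : Type*} [MeasurableSpace X] (P : Kernel X X) (π : Measure X) : Prop :=
  ∀ B : Set X, MeasurableSet B → ∫⁻ x, P x B ∂π = π B

/-- The kernel of the backward recurrence time chain:
`P(i,{i+1}) = p_i` and `P(i,{0}) = 1 - p_i`. -/
def IsBackwardRecurrenceKernel (p : ℕ → ℝ) (P : Kernel ℕ ℕ) : Prop :=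
  ∀ i : ℕ, (P : Kernel ℕ ℕ) i =
    ENNReal.ofReal (p i) • Measure.dirac (i + 1) + ENNReal.ofReal (1 - p i) • Measure.dirac 0

/-- Standing assumptions on the sequence `{p_i}` of the backward recurrence time chain. -/
structure BRChainData (p : ℕ → ℝ) : Prop where
  h0 : p 0 = 1
  hlt : ∀ i : ℕ, 1 ≤ i → 0 < p i ∧ p i < 1
  hprod : Tendsto (fun i : ℕ => ∏ j ∈ Finset.range (i + 1), p j) atTop (nhds 0)
  hsum : Summable fun i : ℕ => ∏ j ∈ Finset.Icc 1 (i + 1), p j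

/-!
A finite measure `μ` on `ℕ` is `P`-invariant as soon as `μ {k + 1} = p k * μ {k}` for every `k`:
`P` is Markov, so `μ.bind P` has the same total mass as `μ`, and the atom at `0` is then forced.
These successor equations give `μ {i} = (∏ j < i, p j) * μ {0}`, hence total mass
`(2 + c) * μ {0}`, so among probability measures they have exactly one solution, namely `π`.
-/

open Finset

section General

variable {X : Type*} [MeasurableSpace X]

theorem invariant_iff_bind_eq (P : Kernel X X) (μ : Measure X) :
    Invariant P μ ↔ μ.bind P = μ := by
  refine ⟨fun h => Measure.ext fun B hB => ?_, fun h B hB => ?_⟩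
  · rw [Measure.bind_apply hB P.aemeasurable, h B hB]
  · rw [← Measure.bind_apply hB P.aemeasurable, h]

theorem Measure.bind_apply_univ_of_isMarkovKernel (P : Kernel X X) [IsMarkovKernel P]
    (μ : Measure X) : (μ.bind P) Set.univ = μ Set.univ := by
  simp [Measure.bind_apply MeasurableSet.univ P.aemeasurable]

theorem measure_univ_eq_tsum_singleton [Countable X] [MeasurableSingletonClass X]
    (μ : Measure X) : μ Set.univ = ∑' x, μ {x} := by
  rw [← lintegral_one, lintegral_countable']
  simp

end General

section MeasuresOnNat

theorem measure_univ_eq_add_tsum_singleton_succ (μ : Measure ℕ) :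
    μ Set.univ = μ {0} + ∑' k, μ {k + 1} := by
  rw [measure_univ_eq_tsum_singleton, tsum_eq_zero_add' ENNReal.summable]

theorem Measure.ext_of_singleton_succ {μ ν : Measure ℕ} [IsFiniteMeasure μ]
    (huniv : μ Set.univ = ν Set.univ) (h : ∀ k, μ {k + 1} = ν {k + 1}) : μ = ν := by
  have htail_fin : ∑' k, μ {k + 1} ≠ ⊤ :=
    (ENNReal.add_ne_top.mp (measure_univ_eq_add_tsum_singleton_succ μ ▸ measure_ne_top μ _)).2
  simp only [measure_univ_eq_add_tsum_singleton_succ, ← h] at huniv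
  refine Measure.ext_of_singleton fun i => ?_
  cases i with
  | zero => exact (ENNReal.add_left_inj htail_fin).mp huniv
  | succ k => exact h k

theorem measure_singleton_eq_prod_mul {μ : Measure ℕ} {a : ℕ → ℝ≥0∞}
    (h : ∀ k, μ {k + 1} = a k * μ {k}) (i : ℕ) :
    μ {i} = (∏ j ∈ range i, a j) * μ {0} := by
  induction i with
  | zero => simp
  | succ k ih => rw [h, ih, prod_range_succ]; ring

theorem Measure.eq_of_singleton_succ_eq_mul {μ ν : Measure ℕ} [IsFiniteMeasure μ]
    {a : ℕ → ℝ≥0∞} (hμ : ∀ k, μ {k + 1} = a k * μ {k}) (hν : ∀ k, ν {k + 1} = a k * ν {k})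
    (huniv : μ Set.univ = ν Set.univ) : μ = ν := by
  set S := ∑' i, ∏ j ∈ range i, a j
  have hmass : ∀ ρ : Measure ℕ, (∀ k, ρ {k + 1} = a k * ρ {k}) → ρ Set.univ = S * ρ {0} :=
    fun ρ hρ => by
      rw [measure_univ_eq_tsum_singleton ρ, tsum_congr (measure_singleton_eq_prod_mul hρ),
        ENNReal.tsum_mul_right]
  have hS : S ≠ 0 := by
    have : (1 : ℝ≥0∞) ≤ S := by simpa using ENNReal.le_tsum (f := fun i => ∏ j ∈ range i, a j) 0
    exact (zero_lt_one.trans_le this).ne'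
  have hμ_fin : S * μ {0} ≠ ⊤ := hmass μ hμ ▸ measure_ne_top μ _
  rw [hmass μ hμ, hmass ν hν] at huniv
  have h0 : μ {0} = ν {0} := by
    rcases eq_or_ne S ⊤ with hS_top | hS_top
    · have hν_fin : S * ν {0} ≠ ⊤ := huniv ▸ hμ_fin
      have hμ0 : μ {0} = 0 := by_contra fun h => hμ_fin (by rw [hS_top, ENNReal.top_mul h])
      have hν0 : ν {0} = 0 := by_contra fun h => hν_fin (by rw [hS_top, ENNReal.top_mul h])
      rw [hμ0, hν0]
    · exact (ENNReal.mul_right_inj hS hS_top).mp huniv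
  refine Measure.ext_of_singleton fun i => ?_
  rw [measure_singleton_eq_prod_mul hμ, measure_singleton_eq_prod_mul hν, h0]

end MeasuresOnNat

namespace BRChainData

variable {p : ℕ → ℝ} (hp : BRChainData p)
include hp

theorem nonneg (i : ℕ) : 0 ≤ p i := by
  rcases i.eq_zero_or_pos with rfl | hi
  · simp [hp.h0]
  · exact (hp.hlt i hi).1.le

theorem le_one (i : ℕ) : p i ≤ 1 := by
  rcases i.eq_zero_or_pos with rfl | hi
  · simp [hp.h0]
  · exact (hp.hlt i hi).2.le

theorem prod_nonneg (s : Finset ℕ) : 0 ≤ ∏ j ∈ s, p j :=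
  Finset.prod_nonneg fun j _ => hp.nonneg j

theorem prod_range_add_two (i : ℕ) :
    ∏ j ∈ range (i + 2), p j = ∏ j ∈ Icc 1 (i + 1), p j := by
  rw [prod_range_succ', hp.h0, mul_one, ← Ico_add_one_right_eq_Icc, prod_Ico_eq_prod_range]
  simp [add_comm]

theorem hasSum_prod_range :
    HasSum (fun i => ∏ j ∈ range i, p j) (2 + ∑' i, ∏ j ∈ Icc 1 (i + 1), p j) := by
  have hsum_two : ∑ i ∈ range 2, ∏ j ∈ range i, p j = 2 := by norm_num [sum_range_succ, hp.h0]
  rw [← hasSum_nat_add_iff' 2, hsum_two, add_sub_cancel_left]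
  simpa only [prod_range_add_two hp] using hp.hsum.hasSum

end BRChainData

namespace IsBackwardRecurrenceKernel

variable {p : ℕ → ℝ} {P : Kernel ℕ ℕ} (hP : IsBackwardRecurrenceKernel p P)
include hP

theorem isMarkovKernel (h0 : ∀ i, 0 ≤ p i) (h1 : ∀ i, p i ≤ 1) : IsMarkovKernel P :=
  ⟨fun i => ⟨by
    simp [hP i, ← ENNReal.ofReal_add (h0 i) (sub_nonneg.mpr (h1 i))]⟩⟩

theorem bind_apply_singleton_succ (μ : Measure ℕ) (k : ℕ) :
    (μ.bind P) {k + 1} = ENNReal.ofReal (p k) * μ {k} := by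
  rw [Measure.bind_apply (measurableSet_singleton _) P.aemeasurable, lintegral_countable',
    tsum_eq_single k]
  · simp [hP k]
  · intro i hi
    simp [hP i, Ne.symm hi]

/-- Mass conservation of `P` pins down the atom at `0`, so only the successor equations remain. -/
theorem invariant_iff (h0 : ∀ i, 0 ≤ p i) (h1 : ∀ i, p i ≤ 1) (μ : Measure ℕ)
    [IsFiniteMeasure μ] :
    Invariant P μ ↔ ∀ k, μ {k + 1} = ENNReal.ofReal (p k) * μ {k} := by
  have := hP.isMarkovKernel h0 h1
  rw [invariant_iff_bind_eq]
  refine ⟨fun h k => by rw [← hP.bind_apply_singleton_succ, h], fun h => ?_⟩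
  refine (Measure.ext_of_singleton_succ ?_ fun k => ?_).symm
  · rw [Measure.bind_apply_univ_of_isMarkovKernel]
  · rw [hP.bind_apply_singleton_succ, h]

end IsBackwardRecurrenceKernel

theorem backward_recurrence_invariant_measure
    (p : ℕ → ℝ) (hp : BRChainData p)
    (P : Kernel ℕ ℕ) (hP : IsBackwardRecurrenceKernel p P)
    (c : ℝ) (hc : c = ∑' i : ℕ, ∏ j ∈ Finset.Icc 1 (i + 1), p j)
    (π : Measure ℕ)
    (hπ0 : π {0} = ENNReal.ofReal (1 / (2 + c)))
    (hπ1 : π {1} = ENNReal.ofReal (1 / (2 + c)))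
    (hπi : ∀ i : ℕ, 2 ≤ i →
      π {i} = ENNReal.ofReal ((∏ j ∈ Finset.range i, p j) / (2 + c))) :
    IsProbabilityMeasure π ∧ Invariant P π ∧
      ∀ π' : Measure ℕ, IsProbabilityMeasure π' → Invariant P π' → π' = π := by
  have hsum : HasSum (fun i => ∏ j ∈ range i, p j) (2 + c) := hc ▸ hp.hasSum_prod_range
  have hpos : 0 < 2 + c := by linarith [hc ▸ tsum_nonneg fun i => hp.prod_nonneg (Icc 1 (i + 1))]
  have hπ : ∀ i, π {i} = ENNReal.ofReal ((∏ j ∈ range i, p j) / (2 + c)) := fun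
    | 0 => by simpa using hπ0
    | 1 => by simpa [hp.h0] using hπ1
    | i + 2 => hπi (i + 2) le_add_self
  have hprob : IsProbabilityMeasure π := by
    constructor
    have hsum_div := hsum.div_const (2 + c)
    rw [measure_univ_eq_tsum_singleton, tsum_congr hπ,
      ← ENNReal.ofReal_tsum_of_nonneg (fun i => div_nonneg (hp.prod_nonneg _) hpos.le)
        hsum_div.summable, hsum_div.tsum_eq, div_self hpos.ne', ENNReal.ofReal_one]
  have hrec : ∀ k, π {k + 1} = ENNReal.ofReal (p k) * π {k} := fun k => by
    rw [hπ, hπ, ← ENNReal.ofReal_mul (hp.nonneg k), prod_range_succ]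
    ring_nf
  have hinv := hP.invariant_iff hp.nonneg hp.le_one
  refine ⟨hprob, (hinv π).mpr hrec, fun π' _ hπ' => ?_⟩
  exact Measure.eq_of_singleton_succ_eq_mul ((hinv π').mp hπ') hrec (by simp)
end
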